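/- For integers n ≥ 3 and p with 1 ≤ p ≤ n−2, the star graph maximises the normalised degree variance among perfect quasi-star graphs on n vertices: v̄(G*(n,p)) ≤ v̄(G*(n,1)). -/

import Mathlib

/-!
In `G*(n,p)` the `p` dominant vertices have degree `n - 1` and the other `n - p` have degree `p`,
so `2m = p(2n - p - 1)`. The deviations of these degrees from the mean `2m/n` are
`(n-p)(n-p-1)/n` and `-p(n-p-1)/n`, and `1 - d = (n-p)(n-p-1)/(n(n-1))`; everything cancels to
`v̄(G*(n,p)) = 2(n-1)(n-p-1)/(n(2n-p-1))`. For `p = 1` this is `(n-2)/n`, and cross-multiplying the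
two fractions leaves the difference `n²(p-1) ≥ 0`.
-/

/-- The perfect quasi-star graph `G*(n,p)`: the simple graph on vertex set `{0,…,n-1}`
(a copy of `{1,…,n}`) in which the first `p` vertices (the dominant vertices) are
adjacent to all other vertices and there are no other edges. -/
def quasiStar (n p : ℕ) : SimpleGraph (Fin n) where
  Adj i j := i ≠ j ∧ ((i : ℕ) < p ∨ (j : ℕ) < p)
  symm := ⟨fun _ _ h => ⟨h.1.symm, h.2.symm⟩⟩
  loopless := ⟨fun _ h => h.1 rfl⟩

instance (n p : ℕ) : DecidableRel (quasiStar n p).Adj :=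
  fun i j => inferInstanceAs (Decidable (i ≠ j ∧ ((i : ℕ) < p ∨ (j : ℕ) < p)))

/-- The degree variance of a finite simple graph `G` on `n` vertices with `m` edges:
`v(G) = (1/(n-1)) · ∑ i, (k_i - 2m/n)^2`. -/
noncomputable def degVar {n : ℕ} (G : SimpleGraph (Fin n)) [DecidableRel G.Adj] : ℝ :=
  (1 / ((n : ℝ) - 1)) *
    ∑ i, ((G.degree i : ℝ) - 2 * (G.edgeFinset.card : ℝ) / n) ^ 2

/-- The normalised degree variance `v̄(G) = ((n-1)/(n·m·(1-d))) · v(G)`, where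
`d = 2m/(n(n-1))` is the density. -/
noncomputable def normDegVar {n : ℕ} (G : SimpleGraph (Fin n)) [DecidableRel G.Adj] : ℝ :=
  ((n : ℝ) - 1) /
      ((n : ℝ) * (G.edgeFinset.card : ℝ) *
        (1 - 2 * (G.edgeFinset.card : ℝ) / ((n : ℝ) * ((n : ℝ) - 1)))) *
    degVar G

open Finset

namespace quasiStar

variable {n p : ℕ}

@[simp]
lemma adj_iff {i j : Fin n} : (quasiStar n p).Adj i j ↔ i ≠ j ∧ ((i : ℕ) < p ∨ (j : ℕ) < p) :=
  Iff.rfl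

lemma neighborFinset_of_lt {i : Fin n} (hi : (i : ℕ) < p) :
    (quasiStar n p).neighborFinset i = univ.erase i := by
  ext j
  simp [hi, eq_comm]

lemma neighborFinset_of_le {i : Fin n} (hi : p ≤ (i : ℕ)) :
    (quasiStar n p).neighborFinset i = ({j | (j : ℕ) < p} : Finset (Fin n)) := by
  ext j
  simp only [SimpleGraph.mem_neighborFinset, adj_iff, mem_filter_univ]
  constructor
  · rintro ⟨-, h | h⟩
    · omega
    · exact h
  · intro hj
    exact ⟨by rintro rfl; omega, Or.inr hj⟩

lemma degree_of_lt {i : Fin n} (hi : (i : ℕ) < p) : (quasiStar n p).degree i = n - 1 := by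
  rw [← SimpleGraph.card_neighborFinset_eq_degree, neighborFinset_of_lt hi,
    card_erase_of_mem (mem_univ i), card_univ, Fintype.card_fin]

lemma degree_of_le {i : Fin n} (hi : p ≤ (i : ℕ)) : (quasiStar n p).degree i = min n p := by
  rw [← SimpleGraph.card_neighborFinset_eq_degree, neighborFinset_of_le hi, Fin.card_filter_val_lt]

lemma sum_apply_degree {M : Type*} [AddCommMonoid M] (hp : p ≤ n) (f : ℕ → M) :
    ∑ i, f ((quasiStar n p).degree i) = p • f (n - 1) + (n - p) • f p := by
  have hdeg (i : Fin n) :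
      f ((quasiStar n p).degree i) = if (i : ℕ) < p then f (n - 1) else f p := by
    split_ifs with h
    · rw [degree_of_lt h]
    · rw [degree_of_le (not_lt.1 h), min_eq_right hp]
  have hcard : #{i : Fin n | (i : ℕ) < p} = p := by rw [Fin.card_filter_val_lt, min_eq_right hp]
  have hcard' : #{i : Fin n | ¬ (i : ℕ) < p} = n - p := by
    rw [filter_not, card_sdiff_of_subset (filter_subset _ _), hcard, card_univ, Fintype.card_fin]
  simp only [hdeg, sum_ite, sum_const, hcard, hcard']

lemma two_mul_card_edgeFinset (hp : p ≤ n) (hn : n ≠ 0) :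
    2 * (#(quasiStar n p).edgeFinset : ℝ) = p * (2 * n - p - 1) := by
  have h := sum_apply_degree hp (Nat.cast : ℕ → ℝ)
  rw [← Nat.cast_sum, SimpleGraph.sum_degrees_eq_twice_card_edges] at h
  push_cast [nsmul_eq_mul, Nat.cast_sub hp, Nat.cast_sub (Nat.one_le_iff_ne_zero.2 hn)] at h
  linear_combination h

lemma sum_sq_sub_mean_degree (hp : p ≤ n) (hn : n ≠ 0) :
    ∑ i, (((quasiStar n p).degree i : ℝ) - 2 * #(quasiStar n p).edgeFinset / n) ^ 2 =
      (p : ℝ) * (n - p) * (n - p - 1) ^ 2 / n := by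
  rw [two_mul_card_edgeFinset hp hn,
    sum_apply_degree hp fun k : ℕ ↦ ((k : ℝ) - p * (2 * n - p - 1) / n) ^ 2]
  push_cast [nsmul_eq_mul, Nat.cast_sub hp, Nat.cast_sub (Nat.one_le_iff_ne_zero.2 hn)]
  have : (n : ℝ) ≠ 0 := by exact_mod_cast hn
  field_simp
  ring

end quasiStar

section

variable {n p : ℕ}

lemma degVar_quasiStar (hp : p ≤ n) (hn : n ≠ 0) :
    degVar (quasiStar n p) = (p : ℝ) * (n - p) * (n - p - 1) ^ 2 / (n * (n - 1)) := by
  rw [degVar, quasiStar.sum_sq_sub_mean_degree hp hn, one_div_mul_eq_div, div_div]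

lemma normDegVar_quasiStar (hp1 : 1 ≤ p) (hp2 : p + 2 ≤ n) :
    normDegVar (quasiStar n p) = 2 * ((n : ℝ) - 1) * (n - p - 1) / (n * (2 * n - p - 1)) := by
  have hm : (#(quasiStar n p).edgeFinset : ℝ) = p * (2 * n - p - 1) / 2 := by
    rw [← quasiStar.two_mul_card_edgeFinset (by omega) (by omega)]
    ring
  have hP : (1 : ℝ) ≤ p := by exact_mod_cast hp1
  have hN : (p : ℝ) + 2 ≤ n := by exact_mod_cast hp2
  have : (n : ℝ) - p ≠ 0 := by linarith
  have : (n : ℝ) - 1 ≠ 0 := by linarith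
  have : (n : ℝ) ≠ 0 := by linarith
  have one_sub_density : 1 - 2 * (#(quasiStar n p).edgeFinset : ℝ) / (n * (n - 1)) =
      (n - p) * (n - p - 1) / (n * (n - 1)) := by
    rw [hm]
    field_simp
    ring
  rw [normDegVar, degVar_quasiStar (by omega) (by omega), one_sub_density, hm]
  field_simp

lemma normDegVar_quasiStar_one (hn : 3 ≤ n) : normDegVar (quasiStar n 1) = ((n : ℝ) - 2) / n := by
  have hN : (3 : ℝ) ≤ n := by exact_mod_cast hn
  have : (n : ℝ) - 1 ≠ 0 := by linarith
  have : (n : ℝ) ≠ 0 := by linarith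
  have : 2 * (n : ℝ) - 1 - 1 ≠ 0 := by linarith
  rw [normDegVar_quasiStar le_rfl (by omega), Nat.cast_one]
  field_simp
  ring

end

theorem normDegVar_quasiStar_le_star_general (n p : ℕ)
    (hp1 : 1 ≤ p) (hp2 : p ≤ n - 2) :
    normDegVar (quasiStar n p) ≤ normDegVar (quasiStar n 1) := by
  have hpn : p + 2 ≤ n := by omega
  rw [normDegVar_quasiStar hp1 hpn, normDegVar_quasiStar_one (by omega)]
  have hP : (1 : ℝ) ≤ p := by exact_mod_cast hp1
  have hN : (p : ℝ) + 2 ≤ n := by exact_mod_cast hpn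
  rw [div_le_div_iff₀ (by nlinarith) (by linarith)]
  nlinarith [mul_nonneg (sq_nonneg (n : ℝ)) (sub_nonneg.2 hP)]

/-- **The star graph maximises normalised degree variance among perfect quasi-star
graphs.**  For integers `n ≥ 3` and `p` with `1 ≤ p ≤ n - 2`, one has
`v̄(G*(n,p)) ≤ v̄(G*(n,1))`. -/
theorem normDegVar_quasiStar_le_star (n p : ℕ) (hn : 3 ≤ n)
    (hp1 : 1 ≤ p) (hp2 : p ≤ n - 2) :
    normDegVar (quasiStar n p) ≤ normDegVar (quasiStar n 1) :=
  normDegVar_quasiStar_le_star_general n p hp1 hp2
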